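/- arXiv:1403.0533 — 7 statements merged into one kernel-verified Lean document; each statement's English description precedes it below -/
import Mathlib

section
/- Let P₀ = P ⊆ ℝⁿ be finite, and for each k let P_{k+1} ⊆ P_k be such that every point of P_k lies within distance α₀ε²(1+ε)^{k-1} of some point of P_{k+1}, where α₀ > 0 and ε ≥ 0. Then the union of open balls of radius α₀(1+ε)^k centered at points of P is contained in the union of open balls of radius α₀(1+ε)^{k+1} centered at points of P_{k+1}, for every k ≥ 0. -/
open Metric

/-- Lemma 19: with a net-tree `P₀ ⊇ P₁ ⊇ …` where every point of `P k` lies within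
distance `α₀ε²(1+ε)^(k-1)` of some point of `P (k+1)`, the union of open balls of
radius `α₀(1+ε)^k` around `P 0` is contained in the union of open balls of radius
`α₀(1+ε)^(k+1)` around `P (k+1)`. -/
theorem netTree_union_balls_subset {n : ℕ} (α₀ ε : ℝ) (hα₀ : 0 < α₀) (hε : 0 ≤ ε)
    (P : ℕ → Set (EuclideanSpace ℝ (Fin n))) (hfin : (P 0).Finite)
    (hsub : ∀ k, P (k + 1) ⊆ P k)
    (hnet : ∀ k, ∀ p ∈ P k, ∃ p' ∈ P (k + 1),
      dist p p' ≤ α₀ * ε ^ 2 * (1 + ε) ^ ((k : ℤ) - 1))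
    (k : ℕ) :
    (⋃ p ∈ P 0, ball p (α₀ * (1 + ε) ^ k)) ⊆
      ⋃ p ∈ P (k + 1), ball p (α₀ * (1 + ε) ^ (k + 1)) := by
  have h1ε : (0:ℝ) < 1 + ε := by linarith
  -- Chain lemma: every point of P 0 is within α₀ε((1+ε)^(k+1)-1)/(1+ε) of P (k+1)
  have chain : ∀ m : ℕ, ∀ p ∈ P 0, ∃ q ∈ P (m + 1),
      dist p q ≤ α₀ * ε * ((1 + ε) ^ (m + 1) - 1) / (1 + ε) := by
    intro m
    induction m with
    | zero =>
      intro p hp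
      obtain ⟨q, hq, hd⟩ := hnet 0 p hp
      refine ⟨q, hq, hd.trans_eq ?_⟩
      have h0 : ((0:ℕ):ℤ) - 1 = -1 := by norm_num
      rw [h0, zpow_neg_one]
      field_simp
      ring
    | succ m ih =>
      intro p hp
      obtain ⟨q, hq, hdq⟩ := ih p hp
      obtain ⟨q', hq', hdq'⟩ := hnet (m + 1) q hq
      refine ⟨q', hq', ?_⟩
      have hnum : ((1 + ε) : ℝ) ^ (((m : ℤ) + 1) - 1) = (1 + ε) ^ m := by
        have : ((m : ℤ) + 1) - 1 = (m : ℤ) := by ring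
        rw [this, zpow_natCast]
      have hdq'' : dist q q' ≤ α₀ * ε ^ 2 * (1 + ε) ^ m := by
        have := hdq'
        push_cast at this
        rwa [hnum] at this
      calc dist p q' ≤ dist p q + dist q q' := dist_triangle _ _ _
        _ ≤ α₀ * ε * ((1 + ε) ^ (m + 1) - 1) / (1 + ε) + α₀ * ε ^ 2 * (1 + ε) ^ m := by
            linarith
        _ = α₀ * ε * ((1 + ε) ^ (m + 1 + 1) - 1) / (1 + ε) := by
            field_simp
            ring
  intro x hx
  simp only [Set.mem_iUnion, mem_ball] at hx ⊢
  obtain ⟨p, hp, hxp⟩ := hx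
  obtain ⟨q, hq, hpq⟩ := chain k p hp
  refine ⟨q, hq, ?_⟩
  have hbound : α₀ * ε * ((1 + ε) ^ (k + 1) - 1) / (1 + ε) ≤ α₀ * ε * (1 + ε) ^ k := by
    rw [div_le_iff₀ h1ε]
    have h1 : (1:ℝ) + ε ≥ 0 := le_of_lt h1ε
    have : α₀ * ε * ((1 + ε) ^ (k + 1) - 1) ≤ α₀ * ε * (1 + ε) ^ (k + 1) := by
      apply mul_le_mul_of_nonneg_left _ (by positivity)
      linarith
    calc α₀ * ε * ((1 + ε) ^ (k + 1) - 1) ≤ α₀ * ε * (1 + ε) ^ (k + 1) := this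
      _ = α₀ * ε * (1 + ε) ^ k * (1 + ε) := by ring
  have : dist x q ≤ dist x p + dist p q := dist_triangle _ _ _
  have : dist x q < α₀ * (1 + ε) ^ k + α₀ * ε * (1 + ε) ^ k := by
    have := hpq.trans hbound
    linarith
  calc dist x q < α₀ * (1 + ε) ^ k + α₀ * ε * (1 + ε) ^ k := this
    _ = α₀ * (1 + ε) ^ (k + 1) := by ring
end

section
/- Let P = {p₀, p₁, …, p_k} ⊂ ℝⁿ with p₀ = 0 and ‖p_i‖ ≤ α for all i. Then for every point x in the convex hull of P there exists an index i such that ‖x − p_i‖ ≤ α/√2. -/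
/-- Lemma 24: if `P ⊂ ℝⁿ` contains the origin and all its points have norm at most
`α`, then every point of the convex hull of `P` is within `α/√2` of a point of `P`. -/
theorem convexHull_point_close_to_vertex {n : ℕ} (α : ℝ)
    (P : Finset (EuclideanSpace ℝ (Fin n)))
    (h0 : (0 : EuclideanSpace ℝ (Fin n)) ∈ P)
    (hα : ∀ p ∈ P, ‖p‖ ≤ α)
    (x : EuclideanSpace ℝ (Fin n))
    (hx : x ∈ convexHull ℝ (P : Set (EuclideanSpace ℝ (Fin n)))) :
    ∃ p ∈ P, ‖x - p‖ ≤ α / Real.sqrt 2 := by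
  by_contra hcon
  push_neg at hcon
  set c : ℝ := α / Real.sqrt 2 with hcdef
  have hα0 : 0 ≤ α := le_trans (by simp) (hα 0 h0)
  have hc0 : 0 ≤ c := by positivity
  have hc2 : c ^ 2 = α ^ 2 / 2 := by
    rw [hcdef, div_pow, Real.sq_sqrt (by norm_num : (0:ℝ) ≤ 2)]
  rw [Finset.convexHull_eq] at hx
  obtain ⟨w, hw0, hw1, hwx⟩ := hx
  rw [Finset.centerMass_eq_of_sum_1 _ _ hw1] at hwx
  simp only [id] at hwx
  have hinner : ‖x‖ ^ 2 = ∑ p ∈ P, w p * (inner ℝ x p : ℝ) := by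
    rw [← real_inner_self_eq_norm_sq]
    have h1 : (inner ℝ x x : ℝ) = inner ℝ x (∑ p ∈ P, w p • p) := by rw [hwx]
    rw [h1, inner_sum]
    exact Finset.sum_congr rfl fun p _ => real_inner_smul_right x p (w p)
  have hx0 : c ^ 2 < ‖x‖ ^ 2 := by
    have := hcon 0 h0
    rw [sub_zero] at this
    exact pow_lt_pow_left₀ this hc0 two_ne_zero
  have hsum : ∑ p ∈ P, w p * (2 * (inner ℝ x p : ℝ)) ≤
      ∑ p ∈ P, w p * (‖x‖ ^ 2 + α ^ 2 - c ^ 2) := by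
    refine Finset.sum_le_sum fun p hp => ?_
    refine mul_le_mul_of_nonneg_left ?_ (hw0 p hp)
    have h1 : c ^ 2 < ‖x - p‖ ^ 2 :=
      pow_lt_pow_left₀ (hcon p hp) hc0 two_ne_zero
    have h2 : ‖x - p‖ ^ 2 = ‖x‖ ^ 2 - 2 * (inner ℝ x p : ℝ) + ‖p‖ ^ 2 := norm_sub_sq_real x p
    have h3 : ‖p‖ ^ 2 ≤ α ^ 2 := pow_le_pow_left₀ (norm_nonneg p) (hα p hp) 2
    nlinarith
  rw [← Finset.sum_mul, hw1, one_mul] at hsum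
  have hL : ∑ p ∈ P, w p * (2 * (inner ℝ x p : ℝ)) = 2 * ‖x‖ ^ 2 := by
    rw [hinner, Finset.mul_sum]
    exact (Finset.sum_congr rfl fun p _ => by ring).symm
  rw [hL] at hsum
  linarith
end

section
/- Let α ≥ 0, ε ≥ 0, and let P = {p₀, …, p_k} ⊂ ℝⁿ be a finite set with ‖p_i − p_j‖ ≤ εα for all i, j. Then the convex hull of the union of the open balls B(p_i; α) is contained in the union of the open balls B(p_i; α√(1 + ε²/2)). -/
open Metric Pointwise

/-- Variance identity: the weighted average of squared distances from `x` to the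
points equals the squared distance from `x` to the barycenter plus the weighted
average of squared distances from the barycenter to the points. -/
lemma sum_weighted_norm_sq_aux {E : Type*} [NormedAddCommGroup E] [InnerProductSpace ℝ E]
    (P : Finset E) (w : E → ℝ) (hw1 : ∑ p ∈ P, w p = 1) (x : E) :
    ∑ p ∈ P, w p * ‖x - p‖ ^ 2 =
      ‖x - ∑ p ∈ P, w p • p‖ ^ 2 + ∑ p ∈ P, w p * ‖(∑ p ∈ P, w p • p) - p‖ ^ 2 := by
  set c := ∑ p ∈ P, w p • p with hc
  have hc0 : ∑ p ∈ P, w p • (c - p) = 0 := by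
    simp only [smul_sub, Finset.sum_sub_distrib, ← Finset.sum_smul, hw1, one_smul, ← hc,
      sub_self]
  have hxp : ∀ p : E, ‖x - p‖ ^ 2 = ‖x - c‖ ^ 2 + 2 * (inner ℝ (x - c) (c - p) : ℝ) + ‖c - p‖ ^ 2 := by
    intro p
    have h : x - p = (x - c) + (c - p) := by abel
    rw [h, norm_add_sq_real]
  calc ∑ p ∈ P, w p * ‖x - p‖ ^ 2
      = ∑ p ∈ P, (w p * ‖x - c‖ ^ 2 + 2 * (inner ℝ (x - c) (w p • (c - p)) : ℝ)
          + w p * ‖c - p‖ ^ 2) := by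
        refine Finset.sum_congr rfl fun p _ => ?_
        rw [hxp p, real_inner_smul_right]
        ring
    _ = (∑ p ∈ P, w p) * ‖x - c‖ ^ 2 + 2 * (inner ℝ (x - c) (∑ p ∈ P, w p • (c - p)) : ℝ)
          + ∑ p ∈ P, w p * ‖c - p‖ ^ 2 := by
        rw [Finset.sum_add_distrib, Finset.sum_add_distrib, ← Finset.sum_mul, ← Finset.mul_sum,
          inner_sum]
    _ = ‖x - c‖ ^ 2 + ∑ p ∈ P, w p * ‖c - p‖ ^ 2 := by
        rw [hw1, hc0, inner_zero_right]; ring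

/-- Proposition 25: if the points of a finite set `P ⊂ ℝⁿ` are pairwise within
distance `εα`, then the convex hull of the union of the open balls `B(p; α)` is
contained in the union of the open balls `B(p; α√(1+ε²/2))`. -/
theorem convexHull_union_balls_subset {n : ℕ} (α ε : ℝ) (hα : 0 ≤ α) (hε : 0 ≤ ε)
    (P : Finset (EuclideanSpace ℝ (Fin n))) (hP : P.Nonempty)
    (hclose : ∀ p ∈ P, ∀ q ∈ P, dist p q ≤ ε * α) :
    convexHull ℝ (⋃ p ∈ P, ball p α) ⊆
      ⋃ p ∈ P, ball p (α * Real.sqrt (1 + ε ^ 2 / 2)) := by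
  have hset : (⋃ p ∈ P, ball p α) = (↑P : Set (EuclideanSpace ℝ (Fin n))) + ball (0 : EuclideanSpace ℝ (Fin n)) α := by
    ext y
    simp only [Set.mem_iUnion, Set.mem_add, mem_ball, exists_prop, Finset.mem_coe]
    constructor
    · rintro ⟨p, hp, hy⟩
      exact ⟨p, hp, y - p, by simpa [dist_eq_norm] using hy, by abel⟩
    · rintro ⟨p, hp, v, hv, rfl⟩
      exact ⟨p, hp, by simpa [dist_eq_norm] using hv⟩
  intro x hx
  rw [hset, convexHull_add, (convex_ball (0 : EuclideanSpace ℝ (Fin n)) α).convexHull_eq, Set.mem_add] at hx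
  obtain ⟨c, hc, v, hv, rfl⟩ := hx
  have hvα : ‖v‖ < α := by simpa [dist_eq_norm] using hv
  rw [Finset.convexHull_eq] at hc
  obtain ⟨w, hw0, hw1, hcm⟩ := hc
  have hcsum : c = ∑ p ∈ P, w p • p := by
    rw [← hcm, Finset.centerMass_eq_of_sum_1 _ _ hw1]; simp
  set T : ℝ := ∑ p ∈ P, w p * ‖c - p‖ ^ 2 with hT
  -- Bound the "variance" T by ε²α²/2.
  have hT2 : 2 * T ≤ ε ^ 2 * α ^ 2 := by
    have hper : ∀ p ∈ P, ∑ q ∈ P, w q * ‖p - q‖ ^ 2 = ‖p - c‖ ^ 2 + T := by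
      intro p _
      rw [hT, hcsum]
      exact sum_weighted_norm_sq_aux P w hw1 p
    have hbound : ∀ p ∈ P, ‖p - c‖ ^ 2 + T ≤ ε ^ 2 * α ^ 2 := by
      intro p hp
      rw [← hper p hp]
      calc ∑ q ∈ P, w q * ‖p - q‖ ^ 2 ≤ ∑ q ∈ P, w q * (ε ^ 2 * α ^ 2) := by
            refine Finset.sum_le_sum fun q hq => ?_
            refine mul_le_mul_of_nonneg_left ?_ (hw0 q hq)
            have h1 : ‖p - q‖ ≤ ε * α := by
              rw [← dist_eq_norm]; exact hclose p hp q hq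
            calc ‖p - q‖ ^ 2 ≤ (ε * α) ^ 2 :=
                  pow_le_pow_left₀ (norm_nonneg _) h1 2
              _ = ε ^ 2 * α ^ 2 := by ring
        _ = ε ^ 2 * α ^ 2 := by rw [← Finset.sum_mul, hw1, one_mul]
    have h2T : 2 * T = ∑ p ∈ P, w p * (‖p - c‖ ^ 2 + T) := by
      have : ∑ p ∈ P, w p * ‖p - c‖ ^ 2 = T := by
        rw [hT]
        exact Finset.sum_congr rfl fun p _ => by rw [norm_sub_rev]
      rw [Finset.sum_congr rfl fun p _ => (mul_add (w p) _ _ : _), Finset.sum_add_distrib,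
        this, ← Finset.sum_mul, hw1, one_mul]
      ring
    calc 2 * T = ∑ p ∈ P, w p * (‖p - c‖ ^ 2 + T) := h2T
      _ ≤ ∑ p ∈ P, w p * (ε ^ 2 * α ^ 2) := by
          refine Finset.sum_le_sum fun p hp => ?_
          exact mul_le_mul_of_nonneg_left (hbound p hp) (hw0 p hp)
      _ = ε ^ 2 * α ^ 2 := by rw [← Finset.sum_mul, hw1, one_mul]
  -- The weighted average of ‖(c+v) - p‖² is ‖v‖² + T.
  have havg : ∑ p ∈ P, w p * ‖(c + v) - p‖ ^ 2 = ‖v‖ ^ 2 + T := by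
    have := sum_weighted_norm_sq_aux P w hw1 (c + v)
    rw [← hcsum] at this
    simpa using this
  -- Some point achieves at most the average.
  have hex : ∃ p ∈ P, ‖(c + v) - p‖ ^ 2 ≤ ‖v‖ ^ 2 + T := by
    by_contra h
    push_neg at h
    obtain ⟨q, hq, hqpos⟩ : ∃ q ∈ P, (0 : ℝ) < w q := by
      by_contra h'
      push_neg at h'
      have : ∑ p ∈ P, w p ≤ 0 := Finset.sum_nonpos fun p hp => h' p hp
      linarith [hw1.symm ▸ this]
    have hlt : ∑ p ∈ P, w p * (‖v‖ ^ 2 + T) < ∑ p ∈ P, w p * ‖(c + v) - p‖ ^ 2 := by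
      refine Finset.sum_lt_sum (fun p hp => ?_) ⟨q, hq, ?_⟩
      · exact mul_le_mul_of_nonneg_left (h p hp).le (hw0 p hp)
      · exact mul_lt_mul_of_pos_left (h q hq) hqpos
    rw [havg, ← Finset.sum_mul, hw1, one_mul] at hlt
    exact lt_irrefl _ hlt
  obtain ⟨p, hp, hple⟩ := hex
  refine Set.mem_iUnion₂.2 ⟨p, hp, ?_⟩
  rw [mem_ball, dist_eq_norm]
  have hrad : α * Real.sqrt (1 + ε ^ 2 / 2) = Real.sqrt (α ^ 2 * (1 + ε ^ 2 / 2)) := by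
    rw [Real.sqrt_mul (sq_nonneg α), Real.sqrt_sq hα]
  rw [hrad, Real.lt_sqrt (norm_nonneg _)]
  have hv2 : ‖v‖ ^ 2 < α ^ 2 := by
    have := pow_lt_pow_left₀ hvα (norm_nonneg v) (by norm_num : 2 ≠ 0)
    exact this
  nlinarith [hple, hT2, hv2]
end

section
/- Interval persistence modules are indecomposable: if J ⊆ ℝ is an interval and 𝕀^J is the persistence module with 𝕀^J(α) = k for α ∈ J and 0 otherwise, with identity structure maps within J, then any direct sum decomposition 𝕀^J ≅ 𝕌 ⊕ 𝕎 has 𝕌 = 0 or 𝕎 = 0. -/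
/-- In a product module isomorphic to a 1-dimensional space `k`, if the first
component has a nonzero element, every element of the second component is zero. -/
lemma aux_dim_one {k : Type*} [Field k] {A B : Type*}
    [AddCommGroup A] [Module k A] [AddCommGroup B] [Module k B]
    (φ : (A × B) ≃ₗ[k] k) {a : A} (ha : a ≠ 0) (b : B) : b = 0 := by
  have hne : φ (a, 0) ≠ 0 := by
    intro h
    apply ha
    have := φ.injective (h.trans (map_zero φ).symm)
    simpa [Prod.ext_iff] using this
  set c : k := φ (0, b) / φ (a, 0) with hc
  have h1 : φ (0, b) = φ (c • (a, 0)) := by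
    rw [map_smul, smul_eq_mul, hc, div_mul_cancel₀ _ hne]
  have h2 : ((0 : A), b) = c • (a, 0) := φ.injective h1
  have := congrArg Prod.snd h2
  simpa using this

/-- Symmetric version: if the second component has a nonzero element, the first
component is trivial. -/
lemma aux_dim_one' {k : Type*} [Field k] {A B : Type*}
    [AddCommGroup A] [Module k A] [AddCommGroup B] [Module k B]
    (φ : (A × B) ≃ₗ[k] k) {b : B} (hb : b ≠ 0) (a : A) : a = 0 :=
  aux_dim_one ((LinearEquiv.prodComm k A B).symm.trans φ) hb a

/-- Interval persistence modules are indecomposable: if `𝕀^J ≅ 𝕌 ⊕ 𝕎` as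
persistence modules, then `𝕌 = 0` or `𝕎 = 0`. Here the interval module `𝕀^J`
is any persistence module whose spaces are `k` on the interval `J` (via `e0`),
zero off `J`, and whose structure maps are the identity within `J`. -/
theorem intervalModule_indecomposable {k : Type*} [Field k]
    (J : Set ℝ) (hJ : J.OrdConnected)
    (IJ : ℝ → Type*) [∀ α, AddCommGroup (IJ α)] [∀ α, Module k (IJ α)]
    (e0 : ∀ α, α ∈ J → (IJ α ≃ₗ[k] k))
    (hzero : ∀ α, α ∉ J → ∀ x : IJ α, x = 0)
    (i : ∀ α α' : ℝ, IJ α →ₗ[k] IJ α')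
    (hi_id : ∀ α, i α α = LinearMap.id)
    (hi_comp : ∀ α α' α'' : ℝ, α ≤ α' → α' ≤ α'' →
      (i α' α'').comp (i α α') = i α α'')
    (hi_interval : ∀ (α α' : ℝ), α ≤ α' → ∀ (hα : α ∈ J) (hα' : α' ∈ J),
      ∀ x : IJ α, e0 α' hα' (i α α' x) = e0 α hα x)
    (U W : ℝ → Type*)
    [∀ α, AddCommGroup (U α)] [∀ α, Module k (U α)]
    [∀ α, AddCommGroup (W α)] [∀ α, Module k (W α)]
    (u : ∀ α α' : ℝ, U α →ₗ[k] U α') (w : ∀ α α' : ℝ, W α →ₗ[k] W α')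
    (hu_id : ∀ α, u α α = LinearMap.id) (hw_id : ∀ α, w α α = LinearMap.id)
    (hu_comp : ∀ α α' α'' : ℝ, α ≤ α' → α' ≤ α'' →
      (u α' α'').comp (u α α') = u α α'')
    (hw_comp : ∀ α α' α'' : ℝ, α ≤ α' → α' ≤ α'' →
      (w α' α'').comp (w α α') = w α α'')
    (e : ∀ α : ℝ, IJ α ≃ₗ[k] (U α × W α))
    (he : ∀ (α α' : ℝ), α ≤ α' → ∀ x : IJ α,
      e α' (i α α' x) = (u α α' (e α x).1, w α α' (e α x).2)) :
    (∀ α : ℝ, ∀ x : U α, x = 0) ∨ (∀ α : ℝ, ∀ x : W α, x = 0) := by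
  -- If some U α has a nonzero element, then α ∈ J
  have memJ_of_U : ∀ α : ℝ, ∀ x : U α, x ≠ 0 → α ∈ J := by
    intro α x hx
    by_contra hα
    apply hx
    have h0 : (e α).symm (x, 0) = 0 := hzero α hα _
    have : ((x, (0 : W α)) : U α × W α) = 0 := by
      have := congrArg (e α) h0
      simpa using this
    exact congrArg Prod.fst this
  have memJ_of_W : ∀ α : ℝ, ∀ y : W α, y ≠ 0 → α ∈ J := by
    intro α y hy
    by_contra hα
    apply hy
    have h0 : (e α).symm (0, y) = 0 := hzero α hα _
    have : (((0 : U α), y) : U α × W α) = 0 := by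
      have := congrArg (e α) h0
      simpa using this
    exact congrArg Prod.snd this
  -- structure maps within J are injective
  have inj : ∀ (α α' : ℝ), α ≤ α' → ∀ (hα : α ∈ J) (hα' : α' ∈ J),
      ∀ x : IJ α, i α α' x = 0 → x = 0 := by
    intro α α' hle hα hα' x hx
    have h1 : e0 α hα x = 0 := by
      rw [← hi_interval α α' hle hα hα' x, hx, map_zero]
    exact (e0 α hα).map_eq_zero_iff.mp h1
  by_cases hU : ∃ α : ℝ, ∃ x : U α, x ≠ 0
  · right
    obtain ⟨α₀, x₀, hx₀⟩ := hU
    have hα₀ : α₀ ∈ J := memJ_of_U α₀ x₀ hx₀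
    intro α y
    by_contra hy
    have hα : α ∈ J := memJ_of_W α y hy
    rcases le_total α₀ α with hle | hle
    · -- push x₀ forward; at α, W is nonzero so U α must vanish; contradiction with injectivity
      set x : IJ α₀ := (e α₀).symm (x₀, 0) with hxdef
      have hxne : x ≠ 0 := by
        intro h
        apply hx₀
        have := congrArg (e α₀) h
        simp [hxdef] at this
        exact this
      have hex : e α₀ x = (x₀, 0) := by simp [hxdef]
      have h1 : e α (i α₀ α x) = (u α₀ α x₀, 0) := by
        rw [he α₀ α hle x, hex]
        simp
      -- the U α component must be zero since W α contains y ≠ 0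
      have hu0 : u α₀ α x₀ = 0 :=
        aux_dim_one' ((e α).symm.trans (e0 α hα)) hy (u α₀ α x₀)
      have h2 : i α₀ α x = 0 := by
        apply (e α).injective
        rw [h1, hu0, map_zero]; rfl
      exact hxne (inj α₀ α hle hα₀ hα x h2)
    · -- push y backward-forward: α ≤ α₀
      set x : IJ α := (e α).symm (0, y) with hxdef
      have hxne : x ≠ 0 := by
        intro h
        apply hy
        have := congrArg (e α) h
        simp [hxdef] at this
        exact this
      have hex : e α x = (0, y) := by simp [hxdef]
      have h1 : e α₀ (i α α₀ x) = (0, w α α₀ y) := by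
        rw [he α α₀ hle x, hex]
        simp
      have hw0 : w α α₀ y = 0 :=
        aux_dim_one ((e α₀).symm.trans (e0 α₀ hα₀)) hx₀ (w α α₀ y)
      have h2 : i α α₀ x = 0 := by
        apply (e α₀).injective
        rw [h1, hw0, map_zero]; rfl
      exact hxne (inj α α₀ hle hα hα₀ x h2)
  · left
    push_neg at hU
    exact hU
end

section
/- For a finite set P in Euclidean space ℝⁿ and any α > 0, the Vietoris–Rips complex satisfies 𝒞(P; α) ⊆ ℛ(P; α) ⊆ 𝒞(P; √2·α), where 𝒞 denotes the Čech complex (nerve of open balls of radius α) and ℛ the Vietoris–Rips complex (all finite subsets of P of diameter less than 2α). -/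
open Metric
open scoped RealInnerProductSpace

section Jung
variable {E : Type*} [NormedAddCommGroup E] [InnerProductSpace ℝ E] [ProperSpace E]

/-- Weak Jung: a finite set with pairwise distances `< 2α` is contained in an
open ball of radius `√2·α`. -/
lemma exists_center (S : Finset E) (hS : S.Nonempty) {α : ℝ} (hα : 0 < α)
    (hdiam : ∀ p ∈ S, ∀ q ∈ S, dist p q < 2 * α) :
    ∃ c : E, ∀ p ∈ S, dist c p < Real.sqrt 2 * α := by
  classical
  set f : E → ℝ := fun x => S.sup' hS (fun q => dist x q) with hf
  have hfcont : Continuous f :=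
    Continuous.finset_sup'_apply hS fun q _ => Continuous.dist continuous_id continuous_const
  obtain ⟨p0, hp0⟩ := id hS
  have hfnonneg : ∀ x, 0 ≤ f x := fun x =>
    le_trans dist_nonneg (Finset.le_sup' _ hp0)
  -- minimize f on a compact ball
  obtain ⟨c, hcK, hcmin⟩ :=
    (isCompact_closedBall p0 (f p0)).exists_isMinOn
      ⟨p0, by simpa using hfnonneg p0⟩ (hfcont.continuousOn)
  have hglobal : ∀ x, f c ≤ f x := by
    intro x
    by_cases hx : x ∈ closedBall p0 (f p0)
    · exact hcmin hx
    · have h1 : f p0 < dist x p0 := by simpa [closedBall, dist_comm] using hx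
      have h2 : dist x p0 ≤ f x := Finset.le_sup' _ hp0
      exact le_trans (hcmin (by simpa using hfnonneg p0)) (le_of_lt (lt_of_lt_of_le h1 h2))
  set r : ℝ := f c with hr
  have hr0 : 0 ≤ r := hfnonneg c
  have hle : ∀ q ∈ S, dist c q ≤ r := fun q hq => Finset.le_sup' _ hq
  obtain ⟨p, hpS, hpr⟩ := S.exists_mem_eq_sup' hS (fun q => dist c q)
  -- key step: find q on the sphere with nonpositive inner product
  have key : ∃ q ∈ S, dist c q = r ∧ ⟪p - c, q - c⟫ ≤ 0 := by
    by_contra hcon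
    push_neg at hcon
    set u : E := p - c with hu
    have hup : 0 < ⟪u, u⟫ := hcon p hpS hpr.symm
    have hunorm : 0 < ‖u‖ := by
      by_contra h
      push_neg at h
      have : u = 0 := norm_le_zero_iff.mp h
      simp [this] at hup
    set b : E → ℝ := fun q => if dist c q = r then ⟪u, q - c⟫ / ‖u‖ ^ 2
      else (r - dist c q) / ‖u‖ with hb
    have hbpos : ∀ q ∈ S, 0 < b q := by
      intro q hq
      by_cases h : dist c q = r
      · simp only [hb, if_pos h]
        exact div_pos (hcon q hq h) (by positivity)
      · simp only [hb, if_neg h]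
        exact div_pos (sub_pos.mpr (lt_of_le_of_ne (hle q hq) h)) hunorm
    set t : ℝ := S.inf' hS b / 2 with ht
    have hinfpos : 0 < S.inf' hS b := by
      obtain ⟨q, hq, hqeq⟩ := S.exists_mem_eq_inf' hS b
      rw [hqeq]; exact hbpos q hq
    have htpos : 0 < t := by positivity
    have htlt : ∀ q ∈ S, t < b q := fun q hq =>
      lt_of_lt_of_le (by linarith) (Finset.inf'_le _ hq)
    have hlt : f (c + t • u) < r := by
      rw [hf]
      rw [Finset.sup'_lt_iff]
      intro q hq
      by_cases h : dist c q = r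
      · have h1 : t < ⟪u, q - c⟫ / ‖u‖ ^ 2 := by
          simpa only [hb, if_pos h] using htlt q hq
        have h2 : t * ‖u‖ ^ 2 < ⟪u, q - c⟫ :=
          (lt_div_iff₀ (by positivity)).mp h1
        have hnq : ‖q - c‖ = r := by rw [← h, dist_comm, dist_eq_norm]
        have hsq : ‖q - (c + t • u)‖ ^ 2 < r ^ 2 := by
          have : q - (c + t • u) = (q - c) - t • u := by abel
          rw [this, norm_sub_sq_real, real_inner_smul_right, norm_smul,
            Real.norm_eq_abs, abs_of_pos htpos, real_inner_comm, hnq]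
          have hpos : 0 < ⟪u, q - c⟫ := hcon q hq h
          nlinarith [htpos, h2, hpos]
        have : dist (c + t • u) q = ‖q - (c + t • u)‖ := by
          rw [dist_comm, dist_eq_norm]
        rw [this]
        exact lt_of_pow_lt_pow_left₀ 2 hr0 hsq
      · have h1 : t < (r - dist c q) / ‖u‖ := by
          simpa only [hb, if_neg h] using htlt q hq
        have h2 : t * ‖u‖ < r - dist c q := (lt_div_iff₀ hunorm).mp h1
        calc dist (c + t • u) q ≤ dist (c + t • u) c + dist c q := dist_triangle _ _ _
          _ = t * ‖u‖ + dist c q := by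
              rw [dist_eq_norm]
              simp [norm_smul, Real.norm_eq_abs, abs_of_pos htpos]
          _ < r := by linarith
    exact absurd (hglobal (c + t • u)) (not_le.mpr hlt)
  obtain ⟨q, hqS, hqr, hinner⟩ := key
  -- conclude r < √2 * α
  have hnp : ‖p - c‖ = r := by rw [dist_comm, dist_eq_norm] at hpr; exact hpr.symm
  have hnq : ‖q - c‖ = r := by rw [← hqr, dist_comm, dist_eq_norm]
  have hpq : ‖p - q‖ ^ 2 = ‖p - c‖ ^ 2 - 2 * ⟪p - c, q - c⟫ + ‖q - c‖ ^ 2 := by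
    have : p - q = (p - c) - (q - c) := by abel
    rw [this, norm_sub_sq_real]
  have h2r : 2 * r ^ 2 ≤ ‖p - q‖ ^ 2 := by
    rw [hpq, hnp, hnq]; linarith
  have hdpq : ‖p - q‖ < 2 * α := by
    rw [← dist_eq_norm]; exact hdiam p hpS q hqS
  have hsq : r ^ 2 < 2 * α ^ 2 := by nlinarith [norm_nonneg (p - q)]
  have hrlt : r < Real.sqrt 2 * α := by
    have : r < Real.sqrt (2 * α ^ 2) := (Real.lt_sqrt hr0).mpr hsq
    rwa [Real.sqrt_mul (by norm_num), Real.sqrt_sq hα.le] at this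
  exact ⟨c, fun x hx => lt_of_le_of_lt (hle x hx) hrlt⟩

end Jung

/-- The Čech complex of `P ⊆ ℝⁿ` at scale `α`. -/
def cechComplex {n : ℕ} (P : Finset (EuclideanSpace ℝ (Fin n))) (α : ℝ) :
    Set (Finset (EuclideanSpace ℝ (Fin n))) :=
  {S | S.Nonempty ∧ S ⊆ P ∧ (⋂ p ∈ (S : Set (EuclideanSpace ℝ (Fin n))), ball p α).Nonempty}

/-- The Vietoris–Rips complex of `P ⊆ ℝⁿ` at scale `α`. -/
def ripsComplex {n : ℕ} (P : Finset (EuclideanSpace ℝ (Fin n))) (α : ℝ) :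
    Set (Finset (EuclideanSpace ℝ (Fin n))) :=
  {S | S.Nonempty ∧ S ⊆ P ∧ ∀ p ∈ S, ∀ q ∈ S, dist p q < 2 * α}

/-- `𝒞(P;α) ⊆ ℛ(P;α) ⊆ 𝒞(P;√2·α)` in Euclidean space. -/
theorem cech_subset_rips_subset_cech {n : ℕ}
    (P : Finset (EuclideanSpace ℝ (Fin n))) (α : ℝ) (hα : 0 < α) :
    cechComplex P α ⊆ ripsComplex P α ∧
    ripsComplex P α ⊆ cechComplex P (Real.sqrt 2 * α) := by
  constructor
  · rintro S ⟨hne, hsub, x, hx⟩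
    refine ⟨hne, hsub, fun p hp q hq => ?_⟩
    simp only [Set.mem_iInter] at hx
    have hp' : dist p x < α := by
      have := hx p (by simpa using hp); simpa [dist_comm] using this
    have hq' : dist x q < α := hx q (by simpa using hq)
    calc dist p q ≤ dist p x + dist x q := dist_triangle _ _ _
      _ < 2 * α := by linarith
  · rintro S ⟨hne, hsub, hdiam⟩
    obtain ⟨c, hc⟩ := exists_center S hne hα hdiam
    refine ⟨hne, hsub, c, ?_⟩
    simp only [Set.mem_iInter]
    intro p hp
    simp only [Finset.mem_coe] at hp
    simpa [dist_comm] using hc p hp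
end

section
/- Let T be the isosceles triangle in ℝ² with vertices p₀ = (0,0), p₁, p₂ where ‖p₁‖ = ‖p₂‖ = α and ‖p₁ − p₂‖ = √2·α. Then there exists a point x in the convex hull of {p₀, p₁, p₂} whose distance to each of the three vertices is exactly α/√2; hence the bound α/√2 in Lemma 24 is sharp. -/
/-- Sharpness of Lemma 24: for the isosceles triangle with apex at the origin,
legs of length `α` and base of length `√2·α`, some point of the convex hull
lies at distance exactly `α/√2` from all three vertices. -/
theorem lemma24_sharp (α : ℝ) (hα : 0 < α)
    (p₁ p₂ : EuclideanSpace ℝ (Fin 2))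
    (h1 : ‖p₁‖ = α) (h2 : ‖p₂‖ = α) (h12 : ‖p₁ - p₂‖ = Real.sqrt 2 * α) :
    ∃ x ∈ convexHull ℝ ({0, p₁, p₂} : Set (EuclideanSpace ℝ (Fin 2))),
      ‖x - 0‖ = α / Real.sqrt 2 ∧ ‖x - p₁‖ = α / Real.sqrt 2 ∧
      ‖x - p₂‖ = α / Real.sqrt 2 := by
  have hs2 : Real.sqrt 2 > 0 := by positivity
  have key : α / Real.sqrt 2 = Real.sqrt 2 * α / 2 := by
    rw [div_eq_div_iff hs2.ne' (by norm_num : (2:ℝ) ≠ 0)]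
    have : Real.sqrt 2 * Real.sqrt 2 = 2 := Real.mul_self_sqrt (by norm_num)
    nlinarith
  refine ⟨(1/2 : ℝ) • p₁ + (1/2 : ℝ) • p₂, ?_, ?_, ?_, ?_⟩
  · have hmem1 : p₁ ∈ ({0, p₁, p₂} : Set (EuclideanSpace ℝ (Fin 2))) := by simp
    have hmem2 : p₂ ∈ ({0, p₁, p₂} : Set (EuclideanSpace ℝ (Fin 2))) := by simp
    exact (convex_convexHull ℝ _) (subset_convexHull ℝ _ hmem1)
      (subset_convexHull ℝ _ hmem2) (by norm_num) (by norm_num) (by norm_num)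
  · have hadd : ‖p₁ + p₂‖ = Real.sqrt 2 * α := by
      have hp : ‖p₁ + p₂‖ * ‖p₁ + p₂‖ + ‖p₁ - p₂‖ * ‖p₁ - p₂‖
          = 2 * (‖p₁‖ * ‖p₁‖ + ‖p₂‖ * ‖p₂‖) := by
        have h := parallelogram_law_with_norm ℝ p₁ p₂
        rw [sq, sq, sq, sq] at h
        exact h
      rw [h1, h2, h12] at hp
      have h2' : Real.sqrt 2 * Real.sqrt 2 = 2 := Real.mul_self_sqrt (by norm_num)
      have hsq : ‖p₁ + p₂‖ * ‖p₁ + p₂‖ = (Real.sqrt 2 * α) * (Real.sqrt 2 * α) := by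
        nlinarith
      exact (mul_self_inj (norm_nonneg _) (by positivity)).mp hsq
    have : (1/2 : ℝ) • p₁ + (1/2 : ℝ) • p₂ - 0 = (1/2 : ℝ) • (p₁ + p₂) := by
      simp [smul_add]
    rw [this, norm_smul, hadd, key]
    simp
    ring
  · have : (1/2 : ℝ) • p₁ + (1/2 : ℝ) • p₂ - p₁ = (1/2 : ℝ) • (p₂ - p₁) := by
      rw [smul_sub]
      module
    rw [this, norm_smul, norm_sub_rev, h12, key]
    simp
    ring
  · have : (1/2 : ℝ) • p₁ + (1/2 : ℝ) • p₂ - p₂ = (1/2 : ℝ) • (p₁ - p₂) := by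
      rw [smul_sub]
      module
    rw [this, norm_smul, h12, key]
    simp
    ring
end

section
/- Let P ⊂ ℝⁿ be finite, 0 ∈ CH(P), all points of P within distance α of the origin, and let x = (x₁, 0, …, 0) with x₁ > α/√2. If p = (p₁,…,p_n) ∈ P maximizes the first coordinate among points of P and ‖x − p‖ > α/√2, then p₁ < x₁, and consequently every point of P has first coordinate strictly less than x₁, contradicting x ∈ CH(P); hence some point of P is within α/√2 of x. -/
/-- The key inequality in the contradiction argument of Lemma 24: if `‖p‖ ≤ α`,
`‖x‖ > α/√2` and `‖p − x‖ > α/√2`, then `⟨p − x, x⟩ < 0`, i.e. `⟨p, x⟩ < ‖x‖²`. -/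
theorem lemma24_key_inequality {n : ℕ} (α : ℝ)
    (p x : EuclideanSpace ℝ (Fin n))
    (hp : ‖p‖ ≤ α) (hx : α / Real.sqrt 2 < ‖x‖)
    (hpx : α / Real.sqrt 2 < ‖p - x‖) :
    (inner ℝ (p - x) x : ℝ) < 0 ∧ (inner ℝ p x : ℝ) < ‖x‖ ^ 2 := by
  have hα : 0 ≤ α := le_trans (norm_nonneg p) hp
  have hs2 : Real.sqrt 2 > 0 := by positivity
  have hsq : (α / Real.sqrt 2) ^ 2 = α ^ 2 / 2 := by
    rw [div_pow, Real.sq_sqrt (by norm_num : (2:ℝ) ≥ 0)]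
  have hαd : 0 ≤ α / Real.sqrt 2 := by positivity
  have h1 : α ^ 2 / 2 < ‖x‖ ^ 2 := by
    rw [← hsq]; exact pow_lt_pow_left₀ hx hαd two_ne_zero
  have h2 : α ^ 2 / 2 < ‖p - x‖ ^ 2 := by
    rw [← hsq]; exact pow_lt_pow_left₀ hpx hαd two_ne_zero
  have h3 : ‖p‖ ^ 2 ≤ α ^ 2 := pow_le_pow_left₀ (norm_nonneg p) hp 2
  have key : ‖p‖ ^ 2 = ‖p - x‖ ^ 2 + 2 * inner ℝ (p - x) x + ‖x‖ ^ 2 := by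
    have := norm_add_sq_real (p - x) x
    simpa using this
  have hlt : (inner ℝ (p - x) x : ℝ) < 0 := by nlinarith
  refine ⟨hlt, ?_⟩
  have : (inner ℝ p x : ℝ) = inner ℝ (p - x) x + ‖x‖ ^ 2 := by
    rw [inner_sub_left, real_inner_self_eq_norm_sq]; ring
  linarith
end
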